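/- Let X be a real Banach space and A : X ⇒ X* a maximally monotone operator of type (D). Then A is of type (NI): F_A(x**, x*) ≥ ⟨x**, x*⟩ for all (x**, x*) ∈ X** × X*. -/

import Mathlib

/-
Let `(x**, x*)` be arbitrary. If some `(a, a*) ∈ gra A` has `⟨a - x**, a* - x*⟩ < 0`, that pair alone
already pushes `F_A(x**, x*)` above `⟨x**, x*⟩`. Otherwise type (D) yields a bounded net
`(a_i, a_i*)` in `gra A` with `a_i* → x*` in norm, and along it
`⟨x**, a_i*⟩ + ⟨a_i, x*⟩ - ⟨a_i, a_i*⟩ = ⟨x**, a_i*⟩ + ⟨a_i, x* - a_i*⟩ → ⟨x**, x*⟩`,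
since the second term is bounded by `M ‖x* - a_i*‖`.
-/

open NormedSpace Filter

noncomputable section

variable {X : Type*}

/-- A set-valued operator `A : X ⇒ X*` identified with its graph is monotone. -/
def IsMonotoneGraph [NormedAddCommGroup X] [NormedSpace ℝ X]
    (A : Set (X × StrongDual ℝ X)) : Prop :=
  ∀ p ∈ A, ∀ q ∈ A, 0 ≤ (p.2 - q.2) (p.1 - q.1)

/-- Maximal monotonicity: monotone, and every monotonically related pair belongs to the graph. -/
def IsMaxMonotoneGraph [NormedAddCommGroup X] [NormedSpace ℝ X]
    (A : Set (X × StrongDual ℝ X)) : Prop :=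
  IsMonotoneGraph A ∧
    ∀ (x : X) (x' : StrongDual ℝ X), (∀ a ∈ A, 0 ≤ (x' - a.2) (x - a.1)) → (x, x') ∈ A

/-- The Fitzpatrick function on `X × X*`, valued in the extended reals. -/
def fitz [NormedAddCommGroup X] [NormedSpace ℝ X]
    (A : Set (X × StrongDual ℝ X)) (x : X) (x' : StrongDual ℝ X) : EReal :=
  ⨆ a ∈ A, ((a.2 x + x' a.1 - a.2 a.1 : ℝ) : EReal)

/-- The extended Fitzpatrick function on `X** × X*`, valued in the extended reals. -/
def fitzExt [NormedAddCommGroup X] [NormedSpace ℝ X]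
    (A : Set (X × StrongDual ℝ X)) (x'' : StrongDual ℝ (StrongDual ℝ X)) (x' : StrongDual ℝ X) : EReal :=
  ⨆ a ∈ A, ((x'' a.2 + x' a.1 - a.2 a.1 : ℝ) : EReal)

/-- The range of the operator with graph `A`. -/
def graphRan [NormedAddCommGroup X] [NormedSpace ℝ X]
    (A : Set (X × StrongDual ℝ X)) : Set (StrongDual ℝ X) :=
  Prod.snd '' A

/-- Type (FP): Fitzpatrick–Phelps operators. -/
def IsTypeFP [NormedAddCommGroup X] [NormedSpace ℝ X]
    (A : Set (X × StrongDual ℝ X)) : Prop :=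
  ∀ U : Set (StrongDual ℝ X), IsOpen U → Convex ℝ U → (U ∩ graphRan A).Nonempty →
    ∀ (x : X) (x' : StrongDual ℝ X), x' ∈ U →
      (∀ a ∈ A, a.2 ∈ U → 0 ≤ (x' - a.2) (x - a.1)) → (x, x') ∈ A

/-- Type (NI): negative infimum operators. -/
def IsTypeNI [NormedAddCommGroup X] [NormedSpace ℝ X]
    (A : Set (X × StrongDual ℝ X)) : Prop :=
  ∀ (x'' : StrongDual ℝ (StrongDual ℝ X)) (x' : StrongDual ℝ X),
    ((x'' x' : ℝ) : EReal) ≤ fitzExt A x'' x'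

/-- Type (D): dense type operators (Gossez). -/
def IsTypeD.{u} [NormedAddCommGroup X] [NormedSpace ℝ X]
    (A : Set (X × StrongDual ℝ X)) : Prop :=
  ∀ (x'' : StrongDual ℝ (StrongDual ℝ X)) (x' : StrongDual ℝ X),
    (∀ a ∈ A, 0 ≤ a.2 a.1 - x' a.1 - x'' a.2 + x'' x') →
    ∃ (ι : Type u) (l : Filter ι), l.NeBot ∧ ∃ a : ι → X × StrongDual ℝ X,
      (∀ i, a i ∈ A) ∧ (∃ M : ℝ, ∀ i, ‖(a i).1‖ ≤ M ∧ ‖(a i).2‖ ≤ M) ∧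
      (∀ f : StrongDual ℝ X, Tendsto (fun i => f ((a i).1)) l (nhds (x'' f))) ∧
      Tendsto (fun i => (a i).2) l (nhds x')

open Topology

section

variable {ι 𝕜 E F : Type*} [NontriviallyNormedField 𝕜] [NormedAddCommGroup E] [NormedSpace 𝕜 E]
  [NormedAddCommGroup F] [NormedSpace 𝕜 F]

theorem Filter.Tendsto.apply_zero_of_isBoundedUnder_le {l : Filter ι} {f : ι → E →L[𝕜] F}
    {x : ι → E} (hf : Tendsto f l (𝓝 0)) (hx : IsBoundedUnder (· ≤ ·) l fun i => ‖x i‖) :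
    Tendsto (fun i => f i (x i)) l (𝓝 0) := by
  have hnorm : Tendsto (fun i => ‖f i‖ * ‖x i‖) l (𝓝 0) :=
    (tendsto_zero_iff_norm_tendsto_zero.1 hf).zero_mul_isBoundedUnder_le
      (by simpa [Function.comp_def] using hx)
  exact squeeze_zero_norm (fun i => (f i).le_opNorm (x i)) hnorm

end

section

variable [NormedAddCommGroup X] [NormedSpace ℝ X]

theorem le_fitzExt_of_mem {A : Set (X × StrongDual ℝ X)} {a : X × StrongDual ℝ X} (ha : a ∈ A)
    (x'' : StrongDual ℝ (StrongDual ℝ X)) (x' : StrongDual ℝ X) :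
    ((x'' a.2 + x' a.1 - a.2 a.1 : ℝ) : EReal) ≤ fitzExt A x'' x' :=
  le_iSup₂ (f := fun p (_ : p ∈ A) => ((x'' p.2 + x' p.1 - p.2 p.1 : ℝ) : EReal)) a ha

theorem le_fitzExt_of_tendsto {ι : Type*} {l : Filter ι} [l.NeBot] {A : Set (X × StrongDual ℝ X)}
    {a : ι → X × StrongDual ℝ X} (haA : ∀ i, a i ∈ A)
    (hbdd : IsBoundedUnder (· ≤ ·) l fun i => ‖(a i).1‖)
    (x'' : StrongDual ℝ (StrongDual ℝ X)) {x' : StrongDual ℝ X}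
    (hsnd : Tendsto (fun i => (a i).2) l (𝓝 x')) :
    ((x'' x' : ℝ) : EReal) ≤ fitzExt A x'' x' := by
  have hdiff : Tendsto (fun i => x' - (a i).2) l (𝓝 0) := by
    simpa using (tendsto_const_nhds (x := x')).sub hsnd
  have hgap : Tendsto (fun i => (x' - (a i).2) (a i).1) l (𝓝 0) :=
    hdiff.apply_zero_of_isBoundedUnder_le hbdd
  have hlim : Tendsto (fun i => x'' (a i).2 + x' (a i).1 - (a i).2 (a i).1) l (𝓝 (x'' x')) := by
    simpa [add_sub_assoc] using ((x''.continuous.tendsto x').comp hsnd).add hgap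
  exact le_of_tendsto' (EReal.tendsto_coe.2 hlim) fun i => le_fitzExt_of_mem (haA i) x'' x'

end

theorem typeD_implies_typeNI_general [NormedAddCommGroup X] [NormedSpace ℝ X]
    (A : Set (X × StrongDual ℝ X)) (hD : IsTypeD A) :
    IsTypeNI A := by
  intro x'' x'
  by_cases hmono : ∀ a ∈ A, 0 ≤ a.2 a.1 - x' a.1 - x'' a.2 + x'' x'
  · obtain ⟨ι, l, hl, a, haA, ⟨M, hM⟩, -, hsnd⟩ := hD x'' x' hmono
    exact le_fitzExt_of_tendsto haA ⟨M, eventually_map.2 (.of_forall fun i => (hM i).1)⟩ x'' hsnd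
  · obtain ⟨a, haA, hlt⟩ : ∃ a ∈ A, a.2 a.1 - x' a.1 - x'' a.2 + x'' x' < 0 := by
      simpa using hmono
    calc ((x'' x' : ℝ) : EReal) ≤ ((x'' a.2 + x' a.1 - a.2 a.1 : ℝ) : EReal) :=
          EReal.coe_le_coe_iff.2 (by linarith)
      _ ≤ fitzExt A x'' x' := le_fitzExt_of_mem haA x'' x'

/-- every maximally monotone operator of type (D) is of type (NI). -/
theorem typeD_implies_typeNI [NormedAddCommGroup X] [NormedSpace ℝ X] [CompleteSpace X]
    (A : Set (X × StrongDual ℝ X)) (hA : IsMaxMonotoneGraph A) (hD : IsTypeD A) :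
    IsTypeNI A :=
  typeD_implies_typeNI_general A hD
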